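/- arXiv:2206.09658 — 2 statements merged into one kernel-verified Lean document; each statement's English description precedes it below -/
import Mathlib

section
/- Let (C, E, s) be an n-exangulated category and F : C → A a half exact functor to an abelian category. Then the additive subfunctor E^F_R of E is closed, i.e., s-restricted-to-E^F_R deflations are closed under composition; equivalently, (C, E^F_R, s|_{E^F_R}) is an n-exangulated category. -/
open CategoryTheory CategoryTheory.Limits Opposite

universe v u v₂ u₂

/-- A candidate `n`-exangle: an `(n+2)`-term sequence of composable morphisms in `C`,
in degrees `0, 1, …, n+1`. -/
structure NExCplx (C : Type u) [Category.{v} C] (n : ℕ) where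
  X : Fin (n + 2) → C
  d : ∀ i : Fin (n + 1), X i.castSucc ⟶ X i.succ

namespace NEx

variable {C : Type u} [Category.{v} C]

/-- The degree `0` index. -/
abbrev fin0 (n : ℕ) : Fin (n + 2) := ⟨0, by omega⟩

/-- The degree `n+1` index. -/
abbrev finLast (n : ℕ) : Fin (n + 2) := Fin.last (n + 1)

/-- The group of `E`-extensions attached to a candidate `n`-exangle:
`E(X_{n+1}, X₀)`. -/
abbrev NEext (E : Cᵒᵖ ⥤ C ⥤ AddCommGrpCat.{v}) {n : ℕ} (Z : NExCplx C n) : Type v :=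
  (E.obj (op (Z.X (finLast n)))).obj (Z.X (fin0 n))

/-- Pushforward `a_*δ` of an extension `δ ∈ E(X, A)` along `a : A ⟶ A'`. -/
def pushf (E : Cᵒᵖ ⥤ C ⥤ AddCommGrpCat.{v}) {A A' X : C} (a : A ⟶ A')
    (δ : (E.obj (op X)).obj A) : (E.obj (op X)).obj A' :=
  ((E.obj (op X)).map a) δ

/-- Pullback `c^*δ` of an extension `δ ∈ E(X, A)` along `c : X' ⟶ X`. -/
def pullb (E : Cᵒᵖ ⥤ C ⥤ AddCommGrpCat.{v}) {A X X' : C} (c : X' ⟶ X)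
    (δ : (E.obj (op X)).obj A) : (E.obj (op X')).obj A :=
  ((E.map c.op).app A) δ

/-- Transport of an extension along equalities of its end objects. -/
def extCast (E : Cᵒᵖ ⥤ C ⥤ AddCommGrpCat.{v}) {A A' X X' : C} (hA : A = A') (hX : X = X')
    (δ : (E.obj (op X)).obj A) : (E.obj (op X')).obj A' :=
  pullb E (eqToHom hX.symm) (pushf E (eqToHom hA) δ)

/-- A morphism of (candidate) `n`-exangles `⟨Z, δ⟩ → ⟨W, ρ⟩`. -/
structure ExangleMor (E : Cᵒᵖ ⥤ C ⥤ AddCommGrpCat.{v}) {n : ℕ} (Z W : NExCplx C n)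
    (δ : NEext E Z) (ρ : NEext E W) where
  app : ∀ i : Fin (n + 2), Z.X i ⟶ W.X i
  comm : ∀ i : Fin (n + 1), Z.d i ≫ app i.succ = app i.castSucc ≫ W.d i
  compat : pushf E (app (fin0 n)) δ = pullb E (app (finLast n)) ρ


variable [Preadditive C] [HasBinaryBiproducts C]

/-- Objects of the total complex (mapping cone) of a ladder with rows `A`, `B`. -/
noncomputable def coneX (n : ℕ) (A B : Fin (n + 1) → C) (i : Fin (n + 2)) : C :=
  if _ : i.val = 0 then A ⟨0, Nat.succ_pos n⟩
  else if _ : i.val ≤ n then A ⟨i.val, by omega⟩ ⊞ B ⟨i.val - 1, by omega⟩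
  else B ⟨n, Nat.lt_succ_self n⟩

lemma coneX_zero (n : ℕ) (A B : Fin (n + 1) → C) :
    coneX n A B (fin0 n) = A ⟨0, Nat.succ_pos n⟩ := by
  simp [coneX, fin0]

lemma coneX_mid (n : ℕ) (A B : Fin (n + 1) → C) (i : Fin (n + 2))
    (h0 : i.val ≠ 0) (h1 : i.val ≤ n) :
    coneX n A B i = (A ⟨i.val, by omega⟩ ⊞ B ⟨i.val - 1, by omega⟩) := by
  rw [coneX, dif_neg h0, dif_pos h1]

lemma coneX_last (n : ℕ) (A B : Fin (n + 1) → C) :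
    coneX n A B (finLast n) = B ⟨n, Nat.lt_succ_self n⟩ := by
  rw [coneX, dif_neg (by simp [finLast]), dif_neg (by simp [finLast])]

/-- Differentials of the mapping cone of a ladder:
`d₀ = (-f₀, φ₀)ᵀ`, `dᵢ = [-fᵢ, 0; φᵢ, g_{i-1}]`, `dₙ = (φₙ, g_{n-1})`. -/
noncomputable def coneD (n : ℕ) (A B : Fin (n + 1) → C)
    (f : ∀ i : Fin n, A i.castSucc ⟶ A i.succ)
    (g : ∀ i : Fin n, B i.castSucc ⟶ B i.succ)
    (φ : ∀ i : Fin (n + 1), A i ⟶ B i)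
    (i : Fin (n + 1)) : coneX n A B i.castSucc ⟶ coneX n A B i.succ :=
  if h0 : i.val = 0 then
    if hn : n = 0 then
      eqToHom (show coneX n A B i.castSucc = A ⟨0, Nat.succ_pos n⟩ by
          simp [coneX, h0]) ≫
        φ ⟨0, Nat.succ_pos n⟩ ≫
        eqToHom (show B ⟨0, Nat.succ_pos n⟩ = coneX n A B i.succ by
          subst hn
          rw [coneX, dif_neg (by simp only [Fin.val_succ]; omega),
            dif_neg (by simp only [Fin.val_succ]; omega)])
    else
      eqToHom (show coneX n A B i.castSucc = A ⟨i.val, i.isLt⟩ by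
          rw [coneX, dif_pos (show (i.castSucc).val = 0 from h0)]
          exact congrArg A (Fin.ext h0.symm)) ≫
        biprod.lift (-(f ⟨i.val, by omega⟩)) (φ ⟨i.val, i.isLt⟩) ≫
        eqToHom (show (A ⟨i.val + 1, by omega⟩ ⊞ B ⟨i.val + 1 - 1, by omega⟩ : C)
            = coneX n A B i.succ by
          rw [coneX, dif_neg (by simp only [Fin.val_succ]; omega),
            dif_pos (by simp only [Fin.val_succ]; omega)]
          rfl)
  else if hv : i.val < n then
    eqToHom (show coneX n A B i.castSucc
          = (A ⟨i.val, i.isLt⟩ ⊞ B ⟨i.val - 1, by omega⟩) by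
        rw [coneX, dif_neg (show ¬(i.castSucc).val = 0 from h0),
          dif_pos (show (i.castSucc).val ≤ n by simp only [Fin.coe_castSucc]; omega)]
        rfl) ≫
      biprod.lift (biprod.desc (-(f ⟨i.val, hv⟩)) 0)
        (biprod.desc (φ ⟨i.val, i.isLt⟩)
          (g ⟨i.val - 1, by omega⟩ ≫
            eqToHom (congrArg B (Fin.ext (show i.val - 1 + 1 = i.val by omega))))) ≫
      eqToHom (show (A ⟨i.val + 1, by omega⟩ ⊞ B ⟨i.val + 1 - 1, by omega⟩ : C)
          = coneX n A B i.succ by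
        rw [coneX, dif_neg (by simp only [Fin.val_succ]; omega),
          dif_pos (by simp only [Fin.val_succ]; omega)]
        rfl)
  else
    eqToHom (show coneX n A B i.castSucc
          = (A ⟨i.val, i.isLt⟩ ⊞ B ⟨i.val - 1, by have := i.isLt; omega⟩) by
        rw [coneX, dif_neg (show ¬(i.castSucc).val = 0 from h0),
          dif_pos (show (i.castSucc).val ≤ n by
            simp only [Fin.coe_castSucc]; have := i.isLt; omega)]
        rfl) ≫
      biprod.desc (φ ⟨i.val, i.isLt⟩)
        (g ⟨i.val - 1, by have := i.isLt; omega⟩ ≫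
          eqToHom (congrArg B (Fin.ext (show i.val - 1 + 1 = i.val by omega)))) ≫
      eqToHom (show B ⟨i.val, i.isLt⟩ = coneX n A B i.succ by
        rw [coneX, dif_neg (by simp only [Fin.val_succ]; omega),
          dif_neg (by simp only [Fin.val_succ]; have := i.isLt; omega)]
        exact congrArg B (Fin.ext (show (i.val : ℕ) = n by have := i.isLt; omega)))

/-- The mapping cone (total complex) of a ladder, as a candidate `n`-exangle. -/
noncomputable def coneCplx (n : ℕ) (A B : Fin (n + 1) → C)
    (f : ∀ i : Fin n, A i.castSucc ⟶ A i.succ)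
    (g : ∀ i : Fin n, B i.castSucc ⟶ B i.succ)
    (φ : ∀ i : Fin (n + 1), A i ⟶ B i) : NExCplx C n :=
  ⟨coneX n A B, coneD n A B f g φ⟩


/-- Objects of the total complex (mapping cocone) of a ladder with rows `A`, `B`. -/
noncomputable def coconeX (n : ℕ) (A B : Fin (n + 1) → C) (i : Fin (n + 2)) : C :=
  if _ : i.val = 0 then A ⟨0, Nat.succ_pos n⟩
  else if _ : i.val ≤ n then B ⟨i.val - 1, by omega⟩ ⊞ A ⟨i.val, by omega⟩
  else B ⟨n, Nat.lt_succ_self n⟩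

/-- Differentials of the mapping cocone of a ladder:
`d₀ = (φ₀, -f₀)ᵀ`, `dᵢ = [g_{i-1}, φᵢ; 0, -fᵢ]`, `dₙ = (g_{n-1}, φₙ)`. -/
noncomputable def coconeD (n : ℕ) (A B : Fin (n + 1) → C)
    (f : ∀ i : Fin n, A i.castSucc ⟶ A i.succ)
    (g : ∀ i : Fin n, B i.castSucc ⟶ B i.succ)
    (φ : ∀ i : Fin (n + 1), A i ⟶ B i)
    (i : Fin (n + 1)) : coconeX n A B i.castSucc ⟶ coconeX n A B i.succ :=
  if h0 : i.val = 0 then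
    if hn : n = 0 then
      eqToHom (show coconeX n A B i.castSucc = A ⟨0, Nat.succ_pos n⟩ by
          simp [coconeX, h0]) ≫
        φ ⟨0, Nat.succ_pos n⟩ ≫
        eqToHom (show B ⟨0, Nat.succ_pos n⟩ = coconeX n A B i.succ by
          subst hn
          rw [coconeX, dif_neg (by simp only [Fin.val_succ]; omega),
            dif_neg (by simp only [Fin.val_succ]; omega)])
    else
      eqToHom (show coconeX n A B i.castSucc = A ⟨i.val, i.isLt⟩ by
          rw [coconeX, dif_pos (show (i.castSucc).val = 0 from h0)]
          exact congrArg A (Fin.ext h0.symm)) ≫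
        biprod.lift (φ ⟨i.val, i.isLt⟩) (-(f ⟨i.val, by omega⟩)) ≫
        eqToHom (show (B ⟨i.val + 1 - 1, by omega⟩ ⊞ A ⟨i.val + 1, by omega⟩ : C)
            = coconeX n A B i.succ by
          rw [coconeX, dif_neg (by simp only [Fin.val_succ]; omega),
            dif_pos (by simp only [Fin.val_succ]; omega)]
          rfl)
  else if hv : i.val < n then
    eqToHom (show coconeX n A B i.castSucc
          = (B ⟨i.val - 1, by omega⟩ ⊞ A ⟨i.val, i.isLt⟩) by
        rw [coconeX, dif_neg (show ¬(i.castSucc).val = 0 from h0),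
          dif_pos (show (i.castSucc).val ≤ n by simp only [Fin.coe_castSucc]; omega)]
        rfl) ≫
      biprod.lift
        (biprod.desc (g ⟨i.val - 1, by omega⟩ ≫
            eqToHom (congrArg B (Fin.ext (show i.val - 1 + 1 = i.val by omega))))
          (φ ⟨i.val, i.isLt⟩))
        (biprod.desc 0 (-(f ⟨i.val, hv⟩))) ≫
      eqToHom (show (B ⟨i.val + 1 - 1, by omega⟩ ⊞ A ⟨i.val + 1, by omega⟩ : C)
          = coconeX n A B i.succ by
        rw [coconeX, dif_neg (by simp only [Fin.val_succ]; omega),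
          dif_pos (by simp only [Fin.val_succ]; omega)]
        rfl)
  else
    eqToHom (show coconeX n A B i.castSucc
          = (B ⟨i.val - 1, by have := i.isLt; omega⟩ ⊞ A ⟨i.val, i.isLt⟩) by
        rw [coconeX, dif_neg (show ¬(i.castSucc).val = 0 from h0),
          dif_pos (show (i.castSucc).val ≤ n by
            simp only [Fin.coe_castSucc]; have := i.isLt; omega)]
        rfl) ≫
      biprod.desc
        (g ⟨i.val - 1, by have := i.isLt; omega⟩ ≫
          eqToHom (congrArg B (Fin.ext (show i.val - 1 + 1 = i.val by omega))))
        (φ ⟨i.val, i.isLt⟩) ≫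
      eqToHom (show B ⟨i.val, i.isLt⟩ = coconeX n A B i.succ by
        rw [coconeX, dif_neg (by simp only [Fin.val_succ]; omega),
          dif_neg (by simp only [Fin.val_succ]; have := i.isLt; omega)]
        exact congrArg B (Fin.ext (show (i.val : ℕ) = n by have := i.isLt; omega)))

noncomputable def coconeCplx (n : ℕ) (A B : Fin (n + 1) → C)
    (f : ∀ i : Fin n, A i.castSucc ⟶ A i.succ)
    (g : ∀ i : Fin n, B i.castSucc ⟶ B i.succ)
    (φ : ∀ i : Fin (n + 1), A i ⟶ B i) : NExCplx C n :=
  ⟨coconeX n A B, coconeD n A B f g φ⟩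


/-- Differentials of the total complex in the second sign convention:
`d₀ = (-f₀, φ₀)ᵀ`, `dᵢ = [fᵢ, 0; (-1)^{i+1}φᵢ, g_{i-1}]`,
`dₙ = ((-1)^{n+1}φₙ, g_{n-1})`. -/
noncomputable def coneD' (n : ℕ) (A B : Fin (n + 1) → C)
    (f : ∀ i : Fin n, A i.castSucc ⟶ A i.succ)
    (g : ∀ i : Fin n, B i.castSucc ⟶ B i.succ)
    (φ : ∀ i : Fin (n + 1), A i ⟶ B i)
    (i : Fin (n + 1)) : coneX n A B i.castSucc ⟶ coneX n A B i.succ :=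
  if h0 : i.val = 0 then
    if hn : n = 0 then
      eqToHom (show coneX n A B i.castSucc = A ⟨0, Nat.succ_pos n⟩ by
          simp [coneX, h0]) ≫
        φ ⟨0, Nat.succ_pos n⟩ ≫
        eqToHom (show B ⟨0, Nat.succ_pos n⟩ = coneX n A B i.succ by
          subst hn
          rw [coneX, dif_neg (by simp only [Fin.val_succ]; omega),
            dif_neg (by simp only [Fin.val_succ]; omega)])
    else
      eqToHom (show coneX n A B i.castSucc = A ⟨i.val, i.isLt⟩ by
          rw [coneX, dif_pos (show (i.castSucc).val = 0 from h0)]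
          exact congrArg A (Fin.ext h0.symm)) ≫
        biprod.lift (-(f ⟨i.val, by omega⟩)) (φ ⟨i.val, i.isLt⟩) ≫
        eqToHom (show (A ⟨i.val + 1, by omega⟩ ⊞ B ⟨i.val + 1 - 1, by omega⟩ : C)
            = coneX n A B i.succ by
          rw [coneX, dif_neg (by simp only [Fin.val_succ]; omega),
            dif_pos (by simp only [Fin.val_succ]; omega)]
          rfl)
  else if hv : i.val < n then
    eqToHom (show coneX n A B i.castSucc
          = (A ⟨i.val, i.isLt⟩ ⊞ B ⟨i.val - 1, by omega⟩) by
        rw [coneX, dif_neg (show ¬(i.castSucc).val = 0 from h0),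
          dif_pos (show (i.castSucc).val ≤ n by simp only [Fin.coe_castSucc]; omega)]
        rfl) ≫
      biprod.lift (biprod.desc (f ⟨i.val, hv⟩) 0)
        (biprod.desc (((-1 : ℤ) ^ (i.val + 1)) • φ ⟨i.val, i.isLt⟩)
          (g ⟨i.val - 1, by omega⟩ ≫
            eqToHom (congrArg B (Fin.ext (show i.val - 1 + 1 = i.val by omega))))) ≫
      eqToHom (show (A ⟨i.val + 1, by omega⟩ ⊞ B ⟨i.val + 1 - 1, by omega⟩ : C)
          = coneX n A B i.succ by
        rw [coneX, dif_neg (by simp only [Fin.val_succ]; omega),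
          dif_pos (by simp only [Fin.val_succ]; omega)]
        rfl)
  else
    eqToHom (show coneX n A B i.castSucc
          = (A ⟨i.val, i.isLt⟩ ⊞ B ⟨i.val - 1, by have := i.isLt; omega⟩) by
        rw [coneX, dif_neg (show ¬(i.castSucc).val = 0 from h0),
          dif_pos (show (i.castSucc).val ≤ n by
            simp only [Fin.coe_castSucc]; have := i.isLt; omega)]
        rfl) ≫
      biprod.desc (((-1 : ℤ) ^ (i.val + 1)) • φ ⟨i.val, i.isLt⟩)
        (g ⟨i.val - 1, by have := i.isLt; omega⟩ ≫
          eqToHom (congrArg B (Fin.ext (show i.val - 1 + 1 = i.val by omega)))) ≫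
      eqToHom (show B ⟨i.val, i.isLt⟩ = coneX n A B i.succ by
        rw [coneX, dif_neg (by simp only [Fin.val_succ]; omega),
          dif_neg (by simp only [Fin.val_succ]; have := i.isLt; omega)]
        exact congrArg B (Fin.ext (show (i.val : ℕ) = n by have := i.isLt; omega)))



lemma coconeX_zero (n : ℕ) (A B : Fin (n + 1) → C) :
    coconeX n A B (fin0 n) = A ⟨0, Nat.succ_pos n⟩ := by
  simp [coconeX, fin0]

lemma coconeX_last (n : ℕ) (A B : Fin (n + 1) → C) :
    coconeX n A B (finLast n) = B ⟨n, Nat.lt_succ_self n⟩ := by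
  rw [coconeX, dif_neg (by simp [finLast]), dif_neg (by simp [finLast])]

variable [HasZeroObject C]

/-- A ladder (with rows `A`, `B`, horizontal maps `f`, `g` and vertical maps `φ`)
is a homotopy cartesian diagram with differential `dl` if its total complex
(mapping cone) together with `dl` is a distinguished `n`-exangle. -/
noncomputable def IsHomotopyCartesian (n : ℕ) (E : Cᵒᵖ ⥤ C ⥤ AddCommGrpCat.{v})
    (dist : ∀ Z : NExCplx C n, NEext E Z → Prop)
    (A B : Fin (n + 1) → C)
    (f : ∀ i : Fin n, A i.castSucc ⟶ A i.succ)
    (g : ∀ i : Fin n, B i.castSucc ⟶ B i.succ)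
    (φ : ∀ i : Fin (n + 1), A i ⟶ B i)
    (dl : (E.obj (op (B ⟨n, Nat.lt_succ_self n⟩))).obj (A ⟨0, Nat.succ_pos n⟩)) : Prop :=
  dist (coneCplx n A B f g φ)
    (extCast E (coneX_zero n A B).symm (coneX_last n A B).symm dl)

/-- The dual notion, using the mapping cocone. -/
noncomputable def IsCoHomotopyCartesian (n : ℕ) (E : Cᵒᵖ ⥤ C ⥤ AddCommGrpCat.{v})
    (dist : ∀ Z : NExCplx C n, NEext E Z → Prop)
    (A B : Fin (n + 1) → C)
    (f : ∀ i : Fin n, A i.castSucc ⟶ A i.succ)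
    (g : ∀ i : Fin n, B i.castSucc ⟶ B i.succ)
    (φ : ∀ i : Fin (n + 1), A i ⟶ B i)
    (dl : (E.obj (op (B ⟨n, Nat.lt_succ_self n⟩))).obj (A ⟨0, Nat.succ_pos n⟩)) : Prop :=
  dist (coconeCplx n A B f g φ)
    (extCast E (coconeX_zero n A B).symm (coconeX_last n A B).symm dl)

/-- `fm` is an inflation: it occurs as the `0`-th differential of some distinguished
`n`-exangle. -/
def IsInflationFor (n : ℕ) (E : Cᵒᵖ ⥤ C ⥤ AddCommGrpCat.{v})
    (dist : ∀ Z : NExCplx C n, NEext E Z → Prop) {X Y : C} (fm : X ⟶ Y) : Prop :=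
  ∃ (Z : NExCplx C n) (δ : NEext E Z), dist Z δ ∧
    ∃ (h1 : Z.X (fin0 n) = X) (h2 : Z.X (Fin.succ ⟨0, Nat.succ_pos n⟩) = Y),
      Z.d ⟨0, Nat.succ_pos n⟩ = eqToHom h1 ≫ fm ≫ eqToHom h2.symm

/-- `gm` is a deflation: it occurs as the `n`-th differential of some distinguished
`n`-exangle. -/
def IsDeflationFor (n : ℕ) (E : Cᵒᵖ ⥤ C ⥤ AddCommGrpCat.{v})
    (dist : ∀ Z : NExCplx C n, NEext E Z → Prop) {X Y : C} (gm : X ⟶ Y) : Prop :=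
  ∃ (Z : NExCplx C n) (δ : NEext E Z), dist Z δ ∧
    ∃ (h1 : Z.X (Fin.castSucc (Fin.last n)) = X) (h2 : Z.X (finLast n) = Y),
      Z.d (Fin.last n) = eqToHom h1 ≫ gm ≫ eqToHom h2.symm

/-- A pre-`n`-exangulated category structure on the additive category `C`:
an additive bifunctor `E : Cᵒᵖ × C → Ab` together with an exact realization,
recorded by the predicate `Distinguished` singling out the distinguished
`n`-exangles, subject to exactness of the associated Hom-sequences (R1),
existence of realizations, lifting of morphisms of extensions (R0), and
closure of inflations and deflations under composition (EA1). -/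
structure PreNExangulated (C : Type u) [Category.{v} C] [Preadditive C]
    [HasZeroObject C] [HasBinaryBiproducts C] (n : ℕ) where
  E : Cᵒᵖ ⥤ C ⥤ AddCommGrpCat.{v}
  Distinguished : ∀ Z : NExCplx C n, NEext E Z → Prop
  exact_contra_mid : ∀ ⦃Z : NExCplx C n⦄ ⦃δ : NEext E Z⦄, Distinguished Z δ →
    ∀ (W : C) (i : Fin n),
      Function.Exact (fun h : W ⟶ Z.X i.castSucc.castSucc => h ≫ Z.d i.castSucc)
        (fun h : W ⟶ Z.X i.succ.castSucc => h ≫ Z.d i.succ)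
  exact_contra_last : ∀ ⦃Z : NExCplx C n⦄ ⦃δ : NEext E Z⦄, Distinguished Z δ →
    ∀ (W : C),
      Function.Exact (fun h : W ⟶ Z.X (Fin.castSucc (Fin.last n)) => h ≫ Z.d (Fin.last n))
        (fun h : W ⟶ Z.X (finLast n) => pullb E h δ)
  exact_cov_mid : ∀ ⦃Z : NExCplx C n⦄ ⦃δ : NEext E Z⦄, Distinguished Z δ →
    ∀ (W : C) (i : Fin n),
      Function.Exact (fun h : Z.X i.succ.succ ⟶ W => Z.d i.succ ≫ h)
        (fun h : Z.X i.castSucc.succ ⟶ W => Z.d i.castSucc ≫ h)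
  exact_cov_first : ∀ ⦃Z : NExCplx C n⦄ ⦃δ : NEext E Z⦄, Distinguished Z δ →
    ∀ (W : C),
      Function.Exact (fun h : Z.X (Fin.succ ⟨0, Nat.succ_pos n⟩) ⟶ W => Z.d ⟨0, Nat.succ_pos n⟩ ≫ h)
        (fun h : Z.X (fin0 n) ⟶ W => pushf E h δ)
  lift_exists : ∀ ⦃Z W : NExCplx C n⦄ ⦃δ : NEext E Z⦄ ⦃ρ : NEext E W⦄,
    Distinguished Z δ → Distinguished W ρ →
    ∀ (a : Z.X (fin0 n) ⟶ W.X (fin0 n)) (c : Z.X (finLast n) ⟶ W.X (finLast n)),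
      pushf E a δ = pullb E c ρ →
      ∃ φ : ExangleMor E Z W δ ρ, φ.app (fin0 n) = a ∧ φ.app (finLast n) = c
  realize : ∀ (A Xl : C) (δ : (E.obj (op Xl)).obj A),
    ∃ (Z : NExCplx C n) (h0 : Z.X (fin0 n) = A) (hl : Z.X (finLast n) = Xl),
      Distinguished Z (extCast E h0.symm hl.symm δ)
  infl_comp : ∀ {X Y W : C} (f : X ⟶ Y) (g : Y ⟶ W),
    IsInflationFor n E Distinguished f → IsInflationFor n E Distinguished g →
      IsInflationFor n E Distinguished (f ≫ g)
  defl_comp : ∀ {X Y W : C} (f : X ⟶ Y) (g : Y ⟶ W),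
    IsDeflationFor n E Distinguished f → IsDeflationFor n E Distinguished g →
      IsDeflationFor n E Distinguished (f ≫ g)

/-- The axiom (EA2): a morphism of extensions of the form `(id, c)` between
distinguished `n`-exangles admits a good lift, i.e. one whose mapping cone
together with `(d₀^X)_*ρ` is again a distinguished `n`-exangle. -/
noncomputable def EA2For (n : ℕ) (E : Cᵒᵖ ⥤ C ⥤ AddCommGrpCat.{v})
    (dist : ∀ Z : NExCplx C n, NEext E Z → Prop) : Prop :=
  ∀ (Z W : NExCplx C n) (δ : NEext E Z) (ρ : NEext E W),
    dist Z δ → dist W ρ →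
    ∀ (h0 : Z.X (fin0 n) = W.X (fin0 n)) (c : Z.X (finLast n) ⟶ W.X (finLast n)),
      pushf E (eqToHom h0) δ = pullb E c ρ →
      ∃ φ : ExangleMor E Z W δ ρ,
        φ.app (fin0 n) = eqToHom h0 ∧ φ.app (finLast n) = c ∧
        IsHomotopyCartesian n E dist (fun i => Z.X i.succ) (fun i => W.X i.succ)
          (fun i => Z.d i.succ) (fun i => W.d i.succ) (fun i => φ.app i.succ)
          (pushf E (eqToHom h0.symm ≫ Z.d ⟨0, Nat.succ_pos n⟩) ρ)

/-- The condition (EA2-1): given two distinguished `n`-exangles starting at the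
same object and a morphism `φ₁` compatible with the first differentials, it
extends to a morphism of `n`-exangles `(id, φ₁, φ₂, …, φ_{n+1})` whose induced
ladder (in degrees `1, …, n+1`) is homotopy cartesian with differential
`(f₀)_*δ'`. -/
noncomputable def EA21For (n : ℕ) (E : Cᵒᵖ ⥤ C ⥤ AddCommGrpCat.{v})
    (dist : ∀ Z : NExCplx C n, NEext E Z → Prop) : Prop :=
  ∀ (Z W : NExCplx C n) (δ : NEext E Z) (δ' : NEext E W),
    dist Z δ → dist W δ' →
    ∀ (h0 : Z.X (fin0 n) = W.X (fin0 n))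
      (φ1 : Z.X (Fin.succ ⟨0, Nat.succ_pos n⟩) ⟶ W.X (Fin.succ ⟨0, Nat.succ_pos n⟩)),
      Z.d ⟨0, Nat.succ_pos n⟩ ≫ φ1 = eqToHom h0 ≫ W.d ⟨0, Nat.succ_pos n⟩ →
      ∃ φ : ExangleMor E Z W δ δ',
        φ.app (fin0 n) = eqToHom h0 ∧ φ.app (Fin.succ ⟨0, Nat.succ_pos n⟩) = φ1 ∧
        IsHomotopyCartesian n E dist (fun i => Z.X i.succ) (fun i => W.X i.succ)
          (fun i => Z.d i.succ) (fun i => W.d i.succ) (fun i => φ.app i.succ)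
          (pushf E (eqToHom h0.symm ≫ Z.d ⟨0, Nat.succ_pos n⟩) δ')

/-- The axiom (EA2)ᵒᵖ, dual to (EA2), via mapping cocones. -/
noncomputable def EA2opFor (n : ℕ) (E : Cᵒᵖ ⥤ C ⥤ AddCommGrpCat.{v})
    (dist : ∀ Z : NExCplx C n, NEext E Z → Prop) : Prop :=
  ∀ (W Z : NExCplx C n) (ρ : NEext E W) (δ : NEext E Z),
    dist W ρ → dist Z δ →
    ∀ (hl : W.X (finLast n) = Z.X (finLast n)) (a : W.X (fin0 n) ⟶ Z.X (fin0 n)),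
      pushf E a ρ = pullb E (eqToHom hl) δ →
      ∃ φ : ExangleMor E W Z ρ δ,
        φ.app (fin0 n) = a ∧ φ.app (finLast n) = eqToHom hl ∧
        IsCoHomotopyCartesian n E dist (fun i => W.X i.castSucc) (fun i => Z.X i.castSucc)
          (fun i => W.d i.castSucc) (fun i => Z.d i.castSucc) (fun i => φ.app i.castSucc)
          (pullb E (Z.d (Fin.last n) ≫ eqToHom hl.symm) ρ)

/-- An `n`-exangulated category: a pre-`n`-exangulated category satisfying
(EA2) and (EA2)ᵒᵖ. -/
structure NExangulated (C : Type u) [Category.{v} C] [Preadditive C]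
    [HasZeroObject C] [HasBinaryBiproducts C] (n : ℕ)
    extends PreNExangulated C n where
  ea2 : EA2For n E Distinguished
  ea2op : EA2opFor n E Distinguished

section HalfExact

variable {A : Type u₂} [Category.{v₂} A] [Abelian A]

/-- A functor `F : C → 𝒜` to an abelian category is half exact if it sends every
distinguished `n`-exangle `X₀ → ⋯ → X_{n+1}` to an exact sequence
`FX₀ → ⋯ → FX_{n+1}`. -/
def IsHalfExact {n : ℕ} (N : NExangulated C n) (F : C ⥤ A) : Prop :=
  ∀ ⦃Z : NExCplx C n⦄ ⦃δ : NEext N.E Z⦄, N.Distinguished Z δ → ∀ i : Fin n,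
    ∃ w : F.map (Z.d i.castSucc) ≫ F.map (Z.d i.succ) = 0,
      (ShortComplex.mk (F.map (Z.d i.castSucc)) (F.map (Z.d i.succ)) w).Exact

/-- The subset `E^F_R(X_{n+1}, X₀) ⊆ E(X_{n+1}, X₀)` of extensions all of whose
realizing distinguished `n`-exangles have `F`-epimorphic last differential. -/
def EFR {n : ℕ} (N : NExangulated C n) (F : C ⥤ A) (Xl X0 : C) :
    Set ((N.E.obj (op Xl)).obj X0) :=
  {δ | ∀ (Z : NExCplx C n) (h0 : Z.X (fin0 n) = X0) (hl : Z.X (finLast n) = Xl),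
      N.Distinguished Z (extCast N.E h0.symm hl.symm δ) →
        Epi (F.map (Z.d (Fin.last n)))}

end HalfExact

/-- `gm` is a deflation for the relative structure determined by the subfunctor `S`:
it is the last differential of a distinguished `n`-exangle whose extension lies
in `S`. -/
def IsRelDeflation (n : ℕ) (E : Cᵒᵖ ⥤ C ⥤ AddCommGrpCat.{v})
    (dist : ∀ Z : NExCplx C n, NEext E Z → Prop)
    (S : ∀ Xl X0 : C, Set ((E.obj (op Xl)).obj X0)) {X Y : C} (gm : X ⟶ Y) : Prop :=
  ∃ (Z : NExCplx C n) (δ : NEext E Z), dist Z δ ∧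
    δ ∈ S (Z.X (finLast n)) (Z.X (fin0 n)) ∧
    ∃ (h1 : Z.X (Fin.castSucc (Fin.last n)) = X) (h2 : Z.X (finLast n) = Y),
      Z.d (Fin.last n) = eqToHom h1 ≫ gm ≫ eqToHom h2.symm

end NEx

/-! Any two realizations of an extension are joined by a morphism of `n`-exangles with
identity ends (R0), so whether `F` sends its last differential to an epimorphism does not depend
on the realization. Hence the `E^F_R`-deflations are exactly the deflations `g` with `F g`
epic, and these are closed under composition since deflations and epimorphisms are. -/

namespace NEx

section

variable {C : Type u} [Category.{v} C]

lemma pushf_eqToHom_eq_pullb_extCast (E : Cᵒᵖ ⥤ C ⥤ AddCommGrpCat.{v}) {A A' X X' : C}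
    (hA : A = A') (hX : X = X') (δ : (E.obj (op X)).obj A) :
    pushf E (eqToHom hA) δ = pullb E (eqToHom hX) (extCast E hA hX δ) := by
  subst hA hX
  simp [extCast, pushf, pullb]

lemma extCast_rfl (E : Cᵒᵖ ⥤ C ⥤ AddCommGrpCat.{v}) {A X : C}
    (δ : (E.obj (op X)).obj A) : extCast E rfl rfl δ = δ := by
  simp [extCast, pushf, pullb]

lemma ExangleMor.epi_map_d_last {D : Type u₂} [Category.{v₂} D]
    {E : Cᵒᵖ ⥤ C ⥤ AddCommGrpCat.{v}} {n : ℕ} {Z W : NExCplx C n}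
    {δ : NEext E Z} {ρ : NEext E W} (φ : ExangleMor E Z W δ ρ) (F : C ⥤ D)
    [Epi (F.map (φ.app (finLast n)))] [Epi (F.map (Z.d (Fin.last n)))] :
    Epi (F.map (W.d (Fin.last n))) := by
  have : Epi (F.map (Z.d (Fin.last n) ≫ φ.app (Fin.last n).succ)) := by
    rw [F.map_comp]
    exact epi_comp' ‹_› ‹Epi (F.map (φ.app (finLast n)))›
  rw [φ.comm, F.map_comp] at this
  exact epi_of_epi (F.map (φ.app (Fin.last n).castSucc)) _

end

variable {C : Type u} [Category.{v} C] [Preadditive C] [HasBinaryBiproducts C]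
  [HasZeroObject C] {D : Type u₂} [Category.{v₂} D]

lemma mem_EFR_iff {n : ℕ} (N : NExangulated C n) (F : C ⥤ D) {Z : NExCplx C n}
    {δ : NEext N.E Z} (hδ : N.Distinguished Z δ) :
    δ ∈ EFR N F (Z.X (finLast n)) (Z.X (fin0 n)) ↔ Epi (F.map (Z.d (Fin.last n))) := by
  refine ⟨fun hmem => hmem Z rfl rfl (by rwa [extCast_rfl]), fun hepi W h0 hl hW => ?_⟩
  obtain ⟨φ, -, hφl⟩ := N.lift_exists hδ hW (eqToHom h0.symm) (eqToHom hl.symm)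
    (pushf_eqToHom_eq_pullb_extCast N.E h0.symm hl.symm δ)
  have : Epi (F.map (φ.app (finLast n))) := by
    rw [hφl, eqToHom_map]
    infer_instance
  exact φ.epi_map_d_last F

lemma isRelDeflation_EFR_iff {n : ℕ} (N : NExangulated C n) (F : C ⥤ D) {X Y : C}
    (g : X ⟶ Y) :
    IsRelDeflation n N.E N.Distinguished (EFR N F) g ↔
      IsDeflationFor n N.E N.Distinguished g ∧ Epi (F.map g) := by
  constructor
  · rintro ⟨Z, δ, hδ, hmem, rfl, rfl, hg⟩
    rw [eqToHom_refl, eqToHom_refl, Category.id_comp, Category.comp_id] at hg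
    exact ⟨⟨Z, δ, hδ, rfl, rfl, by simp [hg]⟩, hg ▸ (mem_EFR_iff N F hδ).1 hmem⟩
  · rintro ⟨⟨Z, δ, hδ, rfl, rfl, hg⟩, hepi⟩
    rw [eqToHom_refl, eqToHom_refl, Category.id_comp, Category.comp_id] at hg
    exact ⟨Z, δ, hδ, (mem_EFR_iff N F hδ).2 (hg ▸ hepi), rfl, rfl, by simp [hg]⟩

theorem EFR_closed_general {A' : Type u₂} [Category.{v₂} A']
    (n : ℕ) (N : NExangulated C n) (F : C ⥤ A') :
    ∀ {X Y Z' : C} (f : X ⟶ Y) (g : Y ⟶ Z'),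
      IsRelDeflation n N.E N.Distinguished (EFR N F) f →
      IsRelDeflation n N.E N.Distinguished (EFR N F) g →
      IsRelDeflation n N.E N.Distinguished (EFR N F) (f ≫ g) := by
  intro X Y Z' f g hf hg
  rw [isRelDeflation_EFR_iff] at hf hg ⊢
  obtain ⟨hf, hFf⟩ := hf
  obtain ⟨hg, hFg⟩ := hg
  exact ⟨N.defl_comp f g hf hg, by rw [F.map_comp]; infer_instance⟩

/-- **Theorem 4.5(1), second part.** For a half exact functor `F : C → 𝒜` from an
`n`-exangulated category to an abelian category, the additive subfunctor `E^F_R`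
of `E` is closed: `s|_{E^F_R}`-deflations are closed under composition
(equivalently, `(C, E^F_R, s|_{E^F_R})` is an `n`-exangulated category). -/
theorem EFR_closed {A' : Type u₂} [Category.{v₂} A'] [Abelian A']
    (n : ℕ) (hn : 0 < n) (N : NExangulated C n) (F : C ⥤ A') [F.Additive]
    (hF : IsHalfExact N F) :
    ∀ {X Y Z' : C} (f : X ⟶ Y) (g : Y ⟶ Z'),
      IsRelDeflation n N.E N.Distinguished (EFR N F) f →
      IsRelDeflation n N.E N.Distinguished (EFR N F) g →
      IsRelDeflation n N.E N.Distinguished (EFR N F) (f ≫ g) :=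
  EFR_closed_general n N F

end NEx
end

section
/- Let (C, E, s) be an n-exangulated category and F : C → A a half exact functor. If δ ∈ E^F_R(X_{n+1}, X₀) and a_{n+1} : Y_{n+1} → X_{n+1} is any morphism, then a_{n+1}^* δ ∈ E^F_R(Y_{n+1}, X₀). That is, E^F_R is stable under pullback in the contravariant variable. -/
open CategoryTheory CategoryTheory.Limits Opposite

universe v u v₂ u₂

/-!
Realize `δ` by `Z` and `a^*δ` by `W`. Axiom (EA2), applied to the morphism of extensions
`(id, a)`, lifts it to `φ : W ⟶ Z` whose mapping cone
`⋯ ⟶ W_{n+1} ⊞ Z_n ⟶ Z_{n+1}` is distinguished, so `F` of it is exact at `W_{n+1} ⊞ Z_n`.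
On `Z_n` the last cone map is `d^Z_n`, which `F` sends to an epimorphism. A morphism `q`
out of `F W_{n+1}` killing `F d^W_n`, precomposed with the projection, kills the incoming
cone map and so factors through the outgoing one, by a factor that vanishes on the
epimorphism `F d^Z_n`; hence `q = 0`.
-/

namespace NEx

section Extensions

variable {C : Type u} [Category.{v} C] {E : Cᵒᵖ ⥤ C ⥤ AddCommGrpCat.{v}}

lemma pushf_extCast_pullb {A A' A'' X X' Y Y' : C} (a : Y ⟶ X) (δ : (E.obj (op X)).obj A)
    (hA' : A' = A) (hA'' : A'' = A) (hY : Y' = Y) (hX : X' = X) :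
    pushf E (eqToHom (hA'.trans hA''.symm)) (extCast E hA'.symm hY.symm (pullb E a δ))
      = pullb E (eqToHom hY ≫ a ≫ eqToHom hX.symm) (extCast E hA''.symm hX.symm δ) := by
  subst hA' hA'' hY hX
  simp [extCast, pushf, pullb]

end Extensions

section Cone

variable {C : Type u} [Category.{v} C] [Preadditive C] [HasBinaryBiproducts C]
  {m : ℕ} {A B : Fin (m + 2) → C} (f : ∀ i : Fin (m + 1), A i.castSucc ⟶ A i.succ)
  (g : ∀ i : Fin (m + 1), B i.castSucc ⟶ B i.succ) (φ : ∀ i : Fin (m + 2), A i ⟶ B i)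

lemma coneX_penultimate : coneX (m + 1) A B (Fin.last (m + 1)).castSucc
    = (A (Fin.last (m + 1)) ⊞ B (Fin.last m).castSucc) :=
  coneX_mid (m + 1) A B _ (by simp) (by simp)

lemma coneD_last_inr :
    (biprod.inr ≫ eqToHom (coneX_penultimate (A := A) (B := B)).symm) ≫
        coneD (m + 1) A B f g φ (Fin.last (m + 1))
      = g (Fin.last m) ≫ eqToHom (coneX_last (m + 1) A B).symm := by
  unfold coneD
  rw [dif_neg (show ¬ (Fin.last (m + 1)).val = 0 by simp),
    dif_neg (show ¬ (Fin.last (m + 1)).val < m + 1 by simp)]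
  simp only [Category.assoc, eqToHom_trans_assoc, eqToHom_refl, Category.id_comp,
    biprod.inr_desc_assoc, Category.comp_id]
  rfl

lemma exists_coneD_penultimate_fst :
    ∃ w : coneX (m + 1) A B (Fin.last m).castSucc.castSucc ⟶ A (Fin.last m).castSucc,
      coneD (m + 1) A B f g φ (Fin.last m).castSucc ≫
          eqToHom coneX_penultimate ≫ biprod.fst = w ≫ f (Fin.last m) := by
  cases m with
  | zero =>
    refine ⟨-eqToHom (coneX_zero 1 A B), ?_⟩
    unfold coneD
    rw [dif_pos (show ((Fin.last 0).castSucc : Fin 2).val = 0 from rfl),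
      dif_neg (show ¬ (0 + 1 : ℕ) = 0 by omega)]
    simp only [Category.assoc, eqToHom_trans_assoc, eqToHom_refl, Category.id_comp]
    rw [biprod.lift_fst]
    rw [Preadditive.comp_neg, Preadditive.neg_comp]
    rfl
  | succ k =>
    refine ⟨-(eqToHom (coneX_mid (k + 2) A B _ (by simp) (by simp)) ≫ biprod.fst), ?_⟩
    unfold coneD
    rw [dif_neg (show ¬ ((Fin.last (k + 1)).castSucc : Fin (k + 3)).val = 0 by simp),
      dif_pos (show ((Fin.last (k + 1)).castSucc : Fin (k + 3)).val < k + 2 by simp)]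
    simp only [Category.assoc, eqToHom_trans_assoc, eqToHom_refl, Category.id_comp]
    rw [biprod.lift_fst]
    rw [Preadditive.neg_comp, Category.assoc, ← Preadditive.comp_neg]
    congr 1
    ext
    · simp only [Fin.val_castSucc, Fin.val_last, Fin.succ_mk, Nat.add_one_sub_one,
        Fin.castSucc_mk, biprod.inl_desc, Fin.succ_last, Preadditive.comp_neg,
        BinaryBicone.inl_fst_assoc, neg_inj]
      rfl
    · simp

end Cone

lemma epi_of_exact_of_retraction {𝒜 : Type u₂} [Category.{v₂} 𝒜] [Abelian 𝒜]
    {S : ShortComplex 𝒜} (hS : S.Exact) {Y₁ Y X : 𝒜} {d : Y₁ ⟶ Y} {p : S.X₂ ⟶ Y}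
    {s : Y ⟶ S.X₂} (hsp : s ≫ p = 𝟙 Y) {w : S.X₁ ⟶ Y₁} (hw : S.f ≫ p = w ≫ d)
    {i : X ⟶ S.X₂} (hip : i ≫ p = 0) (hig : Epi (i ≫ S.g)) : Epi d := by
  have : Epi S.g := epi_of_epi i S.g
  rw [Preadditive.epi_iff_cancel_zero]
  intro Q q hq
  have hfq : S.f ≫ p ≫ q = 0 := by rw [← Category.assoc, hw, Category.assoc, hq, comp_zero]
  have hu : hS.desc (p ≫ q) hfq = 0 := by
    rw [← cancel_epi (i ≫ S.g), Category.assoc, hS.g_desc, ← Category.assoc, hip,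
      zero_comp, comp_zero]
  calc q = s ≫ p ≫ q := by rw [← Category.assoc, hsp, Category.id_comp]
    _ = s ≫ S.g ≫ hS.desc (p ≫ q) hfq := by rw [hS.g_desc]
    _ = 0 := by rw [hu, comp_zero, comp_zero]

section HomotopyCartesian

variable {C : Type u} [Category.{v} C] [Preadditive C] [HasBinaryBiproducts C]
  [HasZeroObject C] {𝒜 : Type u₂} [Category.{v₂} 𝒜] [Abelian 𝒜]

lemma epi_map_last_of_isHomotopyCartesian {m : ℕ} {N : NExangulated C (m + 1)} {F : C ⥤ 𝒜}
    [F.PreservesZeroMorphisms] (hF : IsHalfExact N F) {A B : Fin (m + 2) → C}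
    {f : ∀ i : Fin (m + 1), A i.castSucc ⟶ A i.succ}
    {g : ∀ i : Fin (m + 1), B i.castSucc ⟶ B i.succ} {φ : ∀ i : Fin (m + 2), A i ⟶ B i}
    {dl : (N.E.obj (op (B (Fin.last (m + 1))))).obj (A 0)}
    (hcart : IsHomotopyCartesian (m + 1) N.E N.Distinguished A B f g φ dl)
    (hg : Epi (F.map (g (Fin.last m)))) : Epi (F.map (f (Fin.last m))) := by
  obtain ⟨_, hexact⟩ := hF hcart (Fin.last m)
  obtain ⟨w, hw⟩ := exists_coneD_penultimate_fst f g φ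
  have e := coneX_penultimate (A := A) (B := B)
  have hsp : (biprod.inl ≫ eqToHom e.symm) ≫ eqToHom e ≫ biprod.fst = 𝟙 _ := by simp
  have hip : (biprod.inr ≫ eqToHom e.symm) ≫ eqToHom e ≫ biprod.fst = 0 := by simp
  refine epi_of_exact_of_retraction hexact (p := F.map (eqToHom e ≫ biprod.fst))
    (s := F.map (biprod.inl ≫ eqToHom e.symm)) ?_ (w := F.map w) ?_
    (i := F.map (biprod.inr ≫ eqToHom e.symm)) ?_ ?_
  · exact (F.map_comp _ _).symm.trans ((congrArg F.map hsp).trans (F.map_id _))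
  · exact (F.map_comp _ _).symm.trans ((congrArg F.map hw).trans (F.map_comp _ _))
  · exact (F.map_comp _ _).symm.trans ((congrArg F.map hip).trans (F.map_zero _ _))
  · have : Epi (F.map ((biprod.inr ≫ eqToHom e.symm) ≫
        coneD (m + 1) A B f g φ (Fin.last (m + 1)))) := by
      rw [coneD_last_inr, F.map_comp]
      infer_instance
    rwa [F.map_comp (biprod.inr ≫ eqToHom e.symm)] at this

end HomotopyCartesian

variable {C : Type u} [Category.{v} C] [Preadditive C] [HasBinaryBiproducts C]
  [HasZeroObject C]

/-- `E^F_R` is stable under pullback in the contravariant variable: if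
`δ ∈ E^F_R(X_{n+1}, X₀)` and `a_{n+1} : Y_{n+1} ⟶ X_{n+1}`, then
`(a_{n+1})^*δ ∈ E^F_R(Y_{n+1}, X₀)`. -/
theorem EFR_stable_pullback {A' : Type u₂} [Category.{v₂} A'] [Abelian A']
    (n : ℕ) (hn : 0 < n) (N : NExangulated C n) (F : C ⥤ A') [F.Additive]
    (hF : IsHalfExact N F) (Xl Yl X0 : C) (a : Yl ⟶ Xl)
    (δ : (N.E.obj (op Xl)).obj X0) (hδ : δ ∈ EFR N F Xl X0) :
    pullb N.E a δ ∈ EFR N F Yl X0 := by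
  obtain ⟨m, rfl⟩ : ∃ m, n = m + 1 := ⟨n - 1, by omega⟩
  intro W hW0 hWl hW
  obtain ⟨Z, hZ0, hZl, hZ⟩ := N.realize X0 Xl δ
  obtain ⟨φ, -, -, hcart⟩ := N.ea2 W Z _ _ hW hZ (hW0.trans hZ0.symm)
    (eqToHom hWl ≫ a ≫ eqToHom hZl.symm) (pushf_extCast_pullb a δ hW0 hZ0 hWl hZl)
  exact epi_map_last_of_isHomotopyCartesian hF hcart (hδ Z hZ0 hZl hZ)

end NEx
end
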